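/- Under the assumptions of the previous coercivity lemma, for any exponent q with 1 ≤ q ≤ γ, there exists a constant c > 0 depending on a, b, q such that |ρ − r|^q 1_{ρ ∉ [a/2, 2b]} ≤ c · E(ρ|r) for all ρ ≥ 0 and r ∈ [a,b]. -/

import Mathlib

/-!
For `ρ, r > 0` the relative energy is `E(ρ|r) = ρ ∫_r^ρ (p z - p r) / z² dz`, and `E(0|r) = p r`.
As `p` is increasing, cutting this integral at a point `m` between `r` and `ρ` gives
`E(ρ|r) ≥ |p m - p r| * |ρ / m - 1|`. For `ρ ≤ a/2` the choice `m = 3a/4` bounds `E` below by a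
positive constant, while `|ρ - r| ≤ b`. For `ρ ≥ 2b` the choice `m = 3ρ/4` gives
`3 E(ρ|r) ≥ p(3ρ/4) - p b`, which is at least `p(3b/2) - p b > 0` and, because
`p' ≳ ρ^(γ-1)` at infinity, grows like `ρ^γ ≥ ρ^q ≥ |ρ - r|^q`.
-/

open Real Set Filter Topology MeasureTheory intervalIntegral

lemma integral_const_div_sq {c x y : ℝ} (hx : 0 < x) (hy : 0 < y) :
    ∫ z in x..y, c / z ^ 2 = c * (x⁻¹ - y⁻¹) := by
  simp_rw [div_eq_mul_inv, intervalIntegral.integral_const_mul, ← zpow_natCast, ← zpow_neg]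
  rw [integral_zpow (Or.inr ⟨by norm_num, notMem_uIcc_of_lt hx hy⟩)]
  congr 1
  norm_num
  ring

lemma intervalIntegrable_div_sq {f : ℝ → ℝ} (hf : ContinuousOn f (Ioi 0)) {x y : ℝ}
    (hx : 0 < x) (hy : 0 < y) : IntervalIntegrable (fun z => f z / z ^ 2) volume x y :=
  ((hf.div (continuousOn_pow 2) fun _ hz => pow_ne_zero 2 (ne_of_gt hz)).mono
    (ordConnected_Ioi.uIcc_subset hx hy)).intervalIntegrable

lemma mul_inv_sub_inv_le_integral_div_sq {f : ℝ → ℝ} (hf : ContinuousOn f (Ioi 0)) {x y δ : ℝ}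
    (hx : 0 < x) (hxy : x ≤ y) (hδ : ∀ z ∈ Icc x y, δ ≤ f z) :
    δ * (x⁻¹ - y⁻¹) ≤ ∫ z in x..y, f z / z ^ 2 := by
  have hy := hx.trans_le hxy
  rw [← integral_const_div_sq hx hy]
  refine integral_mono_on hxy (intervalIntegrable_div_sq continuousOn_const hx hy)
    (intervalIntegrable_div_sq hf hx hy) fun z hz => ?_
  have hz0 := hx.trans_le hz.1
  gcongr
  exact hδ z hz

lemma integral_div_sq_le_mul_inv_sub_inv {f : ℝ → ℝ} (hf : ContinuousOn f (Ioi 0)) {x y δ : ℝ}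
    (hx : 0 < x) (hxy : x ≤ y) (hδ : ∀ z ∈ Icc x y, f z ≤ δ) :
    ∫ z in x..y, f z / z ^ 2 ≤ δ * (x⁻¹ - y⁻¹) := by
  have hy := hx.trans_le hxy
  rw [← integral_const_div_sq hx hy]
  refine integral_mono_on hxy (intervalIntegrable_div_sq hf hx hy)
    (intervalIntegrable_div_sq continuousOn_const hx hy) fun z hz => ?_
  have hz0 := hx.trans_le hz.1
  gcongr
  exact hδ z hz

noncomputable def pressurePotential (p : ℝ → ℝ) (ρ : ℝ) : ℝ :=
  ρ * ∫ z in (1 : ℝ)..ρ, p z / z ^ 2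

noncomputable def relativeEnergy (p : ℝ → ℝ) (ρ r : ℝ) : ℝ :=
  pressurePotential p ρ - deriv (pressurePotential p) r * (ρ - r) - pressurePotential p r

section RelativeEnergy

variable {p : ℝ → ℝ}

lemma deriv_pressurePotential (hp : ContinuousOn p (Ioi 0)) {r : ℝ} (hr : 0 < r) :
    deriv (pressurePotential p) r = (∫ z in (1 : ℝ)..r, p z / z ^ 2) + p r / r := by
  have hcont : ContinuousOn (fun z => p z / z ^ 2) (Ioi 0) :=
    hp.div (continuousOn_pow 2) fun _ hz => pow_ne_zero 2 (ne_of_gt hz)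
  have hint : HasDerivAt (fun ρ => ∫ z in (1 : ℝ)..ρ, p z / z ^ 2) (p r / r ^ 2) r :=
    integral_hasDerivAt_right (intervalIntegrable_div_sq hp one_pos hr)
      (hcont.stronglyMeasurableAtFilter isOpen_Ioi r hr) (hcont.continuousAt (Ioi_mem_nhds hr))
  have hH : HasDerivAt (pressurePotential p)
      (1 * (∫ z in (1 : ℝ)..r, p z / z ^ 2) + r * (p r / r ^ 2)) r :=
    (hasDerivAt_id' r).mul hint
  rw [hH.deriv]
  field_simp

lemma relativeEnergy_zero_left (hp : ContinuousOn p (Ioi 0)) {r : ℝ} (hr : 0 < r) :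
    relativeEnergy p 0 r = p r := by
  rw [relativeEnergy, deriv_pressurePotential hp hr, pressurePotential, pressurePotential]
  field_simp
  ring

lemma relativeEnergy_eq_mul_integral (hp : ContinuousOn p (Ioi 0)) {ρ r : ℝ} (hρ : 0 < ρ)
    (hr : 0 < r) : relativeEnergy p ρ r = ρ * ∫ z in r..ρ, (p z - p r) / z ^ 2 := by
  have hsplit : ∫ z in r..ρ, (p z - p r) / z ^ 2
      = (∫ z in r..ρ, p z / z ^ 2) - ∫ z in r..ρ, p r / z ^ 2 := by
    rw [← integral_sub (intervalIntegrable_div_sq hp hr hρ)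
      (intervalIntegrable_div_sq continuousOn_const hr hρ)]
    simp_rw [sub_div]
  rw [hsplit, integral_const_div_sq hr hρ, ← integral_interval_sub_left
    (intervalIntegrable_div_sq hp one_pos hρ) (intervalIntegrable_div_sq hp one_pos hr),
    relativeEnergy, deriv_pressurePotential hp hr, pressurePotential, pressurePotential]
  field_simp
  ring

lemma sub_mul_le_relativeEnergy_of_le (hmono : MonotoneOn p (Ici 0)) (hp : ContinuousOn p (Ioi 0))
    {ρ r m : ℝ} (hr : 0 < r) (hrm : r ≤ m) (hmρ : m ≤ ρ) :
    (p m - p r) * (ρ / m - 1) ≤ relativeEnergy p ρ r := by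
  have hm := hr.trans_le hrm
  have hρ := hm.trans_le hmρ
  have hf : ContinuousOn (fun z => p z - p r) (Ioi 0) := hp.sub continuousOn_const
  have hfirst : 0 * (r⁻¹ - m⁻¹) ≤ ∫ z in r..m, (p z - p r) / z ^ 2 :=
    mul_inv_sub_inv_le_integral_div_sq hf hr hrm fun z hz =>
      sub_nonneg.2 (hmono hr.le (hr.le.trans hz.1) hz.1)
  have hsecond : (p m - p r) * (m⁻¹ - ρ⁻¹) ≤ ∫ z in m..ρ, (p z - p r) / z ^ 2 :=
    mul_inv_sub_inv_le_integral_div_sq hf hm hmρ fun z hz =>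
      sub_le_sub_right (hmono hm.le (hm.le.trans hz.1) hz.1) _
  rw [relativeEnergy_eq_mul_integral hp hρ hr, ← integral_add_adjacent_intervals
    (intervalIntegrable_div_sq hf hr hm) (intervalIntegrable_div_sq hf hm hρ)]
  calc (p m - p r) * (ρ / m - 1) = ρ * ((p m - p r) * (m⁻¹ - ρ⁻¹)) := by field_simp
    _ ≤ _ := by gcongr; linarith

lemma sub_mul_le_relativeEnergy_of_ge (hmono : MonotoneOn p (Ici 0)) (hp : ContinuousOn p (Ioi 0))
    (hp0 : p 0 = 0) {ρ r m : ℝ} (hm : 0 < m) (hρ : 0 ≤ ρ) (hρm : ρ ≤ m) (hmr : m ≤ r) :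
    (p r - p m) * (1 - ρ / m) ≤ relativeEnergy p ρ r := by
  have hr := hm.trans_le hmr
  rcases hρ.eq_or_lt with rfl | hρ
  · rw [relativeEnergy_zero_left hp hr, zero_div, sub_zero, mul_one]
    linarith [hp0 ▸ hmono self_mem_Ici hm.le hm.le]
  have hf : ContinuousOn (fun z => p z - p r) (Ioi 0) := hp.sub continuousOn_const
  have hfirst : ∫ z in ρ..m, (p z - p r) / z ^ 2 ≤ (p m - p r) * (ρ⁻¹ - m⁻¹) :=
    integral_div_sq_le_mul_inv_sub_inv hf hρ hρm fun z hz =>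
      sub_le_sub_right (hmono (hρ.le.trans hz.1) hm.le hz.2) _
  have hsecond : ∫ z in m..r, (p z - p r) / z ^ 2 ≤ 0 * (m⁻¹ - r⁻¹) :=
    integral_div_sq_le_mul_inv_sub_inv hf hm hmr fun z hz =>
      sub_nonpos.2 (hmono (hm.le.trans hz.1) hr.le hz.2)
  rw [relativeEnergy_eq_mul_integral hp hρ hr, integral_symm, ← integral_add_adjacent_intervals
    (intervalIntegrable_div_sq hf hρ hm) (intervalIntegrable_div_sq hf hm hr)]
  calc (p r - p m) * (1 - ρ / m) = ρ * -((p m - p r) * (ρ⁻¹ - m⁻¹)) := by field_simp; ring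
    _ ≤ _ := by gcongr; linarith

lemma relativeEnergy_nonneg (hmono : MonotoneOn p (Ici 0)) (hp : ContinuousOn p (Ioi 0))
    (hp0 : p 0 = 0) {ρ r : ℝ} (hρ : 0 ≤ ρ) (hr : 0 < r) : 0 ≤ relativeEnergy p ρ r := by
  rcases le_total r ρ with h | h
  · simpa using sub_mul_le_relativeEnergy_of_le hmono hp hr le_rfl h
  · simpa using sub_mul_le_relativeEnergy_of_ge hmono hp hp0 hr hρ h le_rfl

end RelativeEnergy

lemma exists_rpow_le_mul_of_eventually {g : ℝ → ℝ} {x₀ q δ κ : ℝ} (hx₀ : 0 ≤ x₀)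
    (hq : 0 ≤ q) (hδ : 0 < δ) (hlow : ∀ x ≥ x₀, δ ≤ g x) (hκ : 0 < κ)
    (hgrowth : ∀ᶠ x in atTop, κ * x ^ q ≤ g x) : ∃ C > 0, ∀ x ≥ x₀, x ^ q ≤ C * g x := by
  obtain ⟨M, hM⟩ := eventually_atTop.1 hgrowth
  set N := max M x₀
  have hN : 0 ≤ N := le_max_of_le_right hx₀
  refine ⟨κ⁻¹ + N ^ q / δ, by positivity, fun x hx => ?_⟩
  have hg : 0 ≤ g x := hδ.le.trans (hlow x hx)
  rcases le_total M x with h | h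
  · calc x ^ q = κ⁻¹ * (κ * x ^ q) := by field_simp
      _ ≤ κ⁻¹ * g x := by gcongr; exact hM x h
      _ ≤ _ := by gcongr; exact le_add_of_nonneg_right (by positivity)
  · calc x ^ q ≤ N ^ q := rpow_le_rpow (hx₀.trans hx) (h.trans (le_max_left _ _)) hq
      _ = N ^ q / δ * δ := by field_simp
      _ ≤ N ^ q / δ * g x := by gcongr; exact hlow x hx
      _ ≤ _ := by gcongr; exact le_add_of_nonneg_left (by positivity)

section Pressure

variable {p : ℝ → ℝ}

lemma eventually_mul_rpow_le_sub {γ pinf q : ℝ} (hγ : 1 ≤ γ) (hpinf : 0 < pinf)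
    (hmono : MonotoneOn p (Ici 0)) (hdiff : DifferentiableOn ℝ p (Ioi 0))
    (hlim : Tendsto (fun ρ => deriv p ρ / ρ ^ (γ - 1)) atTop (𝓝 pinf)) (hqγ : q ≤ γ)
    {y : ℝ} (hy : 0 ≤ y) : ∃ κ > 0, ∀ᶠ x in atTop, κ * x ^ q ≤ p x - p y := by
  have hderiv : ∀ᶠ z in atTop, 0 < z ∧ pinf / 2 * z ^ (γ - 1) ≤ deriv p z := by
    filter_upwards [hlim.eventually (eventually_ge_nhds (half_lt_self hpinf)),
      eventually_gt_atTop 0] with z hz hz0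
    exact ⟨hz0, (le_div_iff₀ (rpow_pos_of_pos hz0 _)).1 hz⟩
  obtain ⟨M, hM⟩ := eventually_atTop.1 hderiv
  have hM0 := (hM M le_rfl).1
  refine ⟨pinf / 2 / 2 ^ γ, by positivity, ?_⟩
  filter_upwards [eventually_ge_atTop (2 * M), eventually_ge_atTop (2 * y),
    eventually_ge_atTop 1] with x hxM hxy hx1
  have hx2 : 0 < x / 2 := by linarith
  have hmvt : pinf / 2 * (x / 2) ^ (γ - 1) * (x - x / 2) ≤ p x - p (x / 2) := by
    refine (convex_Ici (x / 2)).mul_sub_le_image_sub_of_le_deriv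
      (hdiff.continuousOn.mono (Ici_subset_Ioi.2 hx2))
      (hdiff.mono (by rw [interior_Ici]; exact Ioi_subset_Ioi hx2.le)) (fun z hz => ?_)
      (x / 2) self_mem_Ici x (mem_Ici.2 (by linarith)) (by linarith)
    rw [interior_Ici, mem_Ioi] at hz
    calc pinf / 2 * (x / 2) ^ (γ - 1) ≤ pinf / 2 * z ^ (γ - 1) := by gcongr
      _ ≤ deriv p z := (hM z (by linarith)).2
  have hpow : pinf / 2 / 2 ^ γ * x ^ q ≤ pinf / 2 * (x / 2) ^ (γ - 1) * (x - x / 2) := by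
    rw [rpow_sub_one hx2.ne', div_rpow (by linarith) zero_le_two]
    calc pinf / 2 / 2 ^ γ * x ^ q ≤ pinf / 2 / 2 ^ γ * x ^ γ := by gcongr
      _ = _ := by field_simp; ring
  linarith [hmono hy hx2.le (by linarith : y ≤ x / 2)]

lemma exists_rpow_abs_sub_le_relativeEnergy_of_le_half (hmono : StrictMonoOn p (Ici 0))
    (hp : ContinuousOn p (Ioi 0)) (hp0 : p 0 = 0) {a b q : ℝ} (ha : 0 < a) (hab : a ≤ b)
    (hq : 0 ≤ q) : ∃ c > 0, ∀ ρ ∈ Icc 0 (a / 2), ∀ r ∈ Icc a b,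
      |ρ - r| ^ q ≤ c * relativeEnergy p ρ r := by
  set δ := p a - p (3 / 4 * a)
  have hδ : 0 < δ :=
    sub_pos.2 (hmono (mem_Ici.2 (by positivity)) ha.le (by linarith : 3 / 4 * a < a))
  have hb := ha.trans_le hab
  refine ⟨3 * b ^ q / δ, by positivity, fun ρ hρ r hr => ?_⟩
  have hδr : δ ≤ p r - p (3 / 4 * a) := by
    linarith [hmono.monotoneOn ha.le (ha.le.trans hr.1) hr.1]
  have hρa : 1 / 3 ≤ 1 - ρ / (3 / 4 * a) := by
    rw [le_sub_comm, div_le_iff₀ (by positivity)]; linarith [hρ.2]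
  have hE : δ / 3 ≤ relativeEnergy p ρ r :=
    calc δ / 3 = δ * (1 / 3) := by ring
      _ ≤ (p r - p (3 / 4 * a)) * (1 - ρ / (3 / 4 * a)) := by gcongr; linarith
      _ ≤ _ := sub_mul_le_relativeEnergy_of_ge hmono.monotoneOn hp hp0 (by positivity) hρ.1
        (by linarith [hρ.2]) (by linarith [hr.1])
  calc |ρ - r| ^ q ≤ b ^ q := by
        refine rpow_le_rpow (abs_nonneg _) ?_ hq
        rw [abs_sub_comm, abs_of_nonneg] <;> linarith [hρ.1, hρ.2, hr.1, hr.2]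
    _ = 3 * b ^ q / δ * (δ / 3) := by field_simp
    _ ≤ _ := by gcongr

lemma exists_rpow_abs_sub_le_relativeEnergy_of_two_mul_le (hmono : StrictMonoOn p (Ici 0))
    (hp : ContinuousOn p (Ioi 0)) {b q κ : ℝ} (hb : 0 < b) (hq : 0 ≤ q) (hκ : 0 < κ)
    (hgrowth : ∀ᶠ x in atTop, κ * x ^ q ≤ p x - p b) :
    ∃ c > 0, ∀ ρ ≥ 2 * b, ∀ r ∈ Ioc 0 b, |ρ - r| ^ q ≤ c * relativeEnergy p ρ r := by
  have hgrowth' : ∀ᶠ x in atTop, κ * (3 / 4) ^ q * x ^ q ≤ p (3 / 4 * x) - p b := by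
    filter_upwards [(tendsto_id.const_mul_atTop (by norm_num : (0 : ℝ) < 3 / 4)).eventually
      hgrowth, eventually_ge_atTop 0] with x hx hx0
    dsimp only [id] at hx
    rwa [mul_rpow (by norm_num) hx0, ← mul_assoc] at hx
  obtain ⟨C, hC, hCg⟩ := exists_rpow_le_mul_of_eventually (g := fun x => p (3 / 4 * x) - p b)
    (by positivity : 0 ≤ 2 * b) hq
    (sub_pos.2 (hmono hb.le (mem_Ici.2 (by positivity)) (by linarith : b < 3 / 4 * (2 * b))))
    (fun x hx => sub_le_sub_right
      (hmono.monotoneOn (mem_Ici.2 (by positivity)) (mem_Ici.2 (by linarith)) (by linarith)) _)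
    (by positivity) hgrowth'
  refine ⟨3 * C, by positivity, fun ρ hρ r hr => ?_⟩
  have hE : p (3 / 4 * ρ) - p b ≤ 3 * relativeEnergy p ρ r := by
    have h := sub_mul_le_relativeEnergy_of_le hmono.monotoneOn hp hr.1
      (by linarith [hr.2] : r ≤ 3 / 4 * ρ) (by linarith : 3 / 4 * ρ ≤ ρ)
    have hρ0 : ρ ≠ 0 := by linarith
    rw [show ρ / (3 / 4 * ρ) - 1 = 1 / 3 by field_simp; ring] at h
    linarith [hmono.monotoneOn hr.1.le hb.le hr.2]
  calc |ρ - r| ^ q ≤ ρ ^ q := by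
        refine rpow_le_rpow (abs_nonneg _) ?_ hq
        rw [abs_of_nonneg] <;> linarith [hr.1, hr.2]
    _ ≤ C * (p (3 / 4 * ρ) - p b) := hCg ρ hρ
    _ ≤ C * (3 * relativeEnergy p ρ r) := by gcongr
    _ = 3 * C * relativeEnergy p ρ r := by ring

end Pressure

theorem relative_energy_residual_bound_general (p : ℝ → ℝ) (γ pinf : ℝ) (hγ : 1 ≤ γ)
    (hpinf : 0 < pinf)
    (hp1 : ContDiffOn ℝ 1 p (Set.Ici 0))
    (hp0 : p 0 = 0) (hp' : ∀ ρ ≥ (0:ℝ), 0 < deriv p ρ)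
    (hlim : Filter.Tendsto (fun ρ => deriv p ρ / ρ ^ (γ - 1)) Filter.atTop (nhds pinf))
    (H : ℝ → ℝ) (hH : ∀ ρ, H ρ = ρ * ∫ z in (1:ℝ)..ρ, p z / z ^ 2)
    (E : ℝ → ℝ → ℝ)
    (hE : ∀ ρ r, E ρ r = H ρ - deriv H r * (ρ - r) - H r)
    (a b : ℝ) (ha : 0 < a) (hab : a < b)
    (q : ℝ) (hq1 : 1 ≤ q) (hqγ : q ≤ γ) :
    ∃ c > (0:ℝ), ∀ ρ ≥ (0:ℝ), ∀ r ∈ Set.Icc a b,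
      |ρ - r| ^ q * (if ρ ∈ Set.Icc (a / 2) (2 * b) then (0:ℝ) else 1)
        ≤ c * E ρ r := by
  obtain rfl : H = pressurePotential p := funext hH
  obtain rfl : E = relativeEnergy p := funext fun ρ => funext (hE ρ)
  have hmono : StrictMonoOn p (Ici 0) := strictMonoOn_of_deriv_pos (convex_Ici 0)
    hp1.continuousOn fun x hx => hp' x (interior_subset hx)
  have hdiff : DifferentiableOn ℝ p (Ioi 0) :=
    (hp1.differentiableOn one_ne_zero).mono Ioi_subset_Ici_self
  have hq : 0 ≤ q := by linarith
  have hb : 0 < b := ha.trans hab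
  obtain ⟨κ, hκ, hgrowth⟩ :=
    eventually_mul_rpow_le_sub hγ hpinf hmono.monotoneOn hdiff hlim hqγ hb.le
  obtain ⟨c₁, hc₁, hsmall⟩ := exists_rpow_abs_sub_le_relativeEnergy_of_le_half hmono
    hdiff.continuousOn hp0 ha hab.le hq
  obtain ⟨c₂, hc₂, hlarge⟩ := exists_rpow_abs_sub_le_relativeEnergy_of_two_mul_le hmono
    hdiff.continuousOn hb hq hκ hgrowth
  refine ⟨c₁ + c₂, add_pos hc₁ hc₂, fun ρ hρ r hr => ?_⟩
  have hr0 := ha.trans_le hr.1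
  have hE := relativeEnergy_nonneg hmono.monotoneOn hdiff.continuousOn hp0 hρ hr0
  split_ifs with hmem
  · rw [mul_zero]; positivity
  rw [mul_one]
  rcases le_or_gt ρ (a / 2) with h | h
  · calc |ρ - r| ^ q ≤ c₁ * relativeEnergy p ρ r := hsmall ρ ⟨hρ, h⟩ r hr
      _ ≤ _ := by gcongr; linarith
  · have h2b : 2 * b ≤ ρ := by by_contra! h'; exact hmem ⟨h.le, h'.le⟩
    calc |ρ - r| ^ q ≤ c₂ * relativeEnergy p ρ r := hlarge ρ h2b r ⟨hr0, hr.2⟩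
      _ ≤ _ := by gcongr; linarith

/-- Residual bound: for `1 ≤ q ≤ γ` there is `c = c(a,b,q) > 0` with
`|ρ − r|^q 1_{ρ ∉ [a/2,2b]} ≤ c E(ρ|r)` for all `ρ ≥ 0`, `r ∈ [a,b]`. -/
theorem relative_energy_residual_bound (p : ℝ → ℝ) (γ pinf : ℝ) (hγ : 1 ≤ γ)
    (hpinf : 0 < pinf)
    (hp2 : ContDiffOn ℝ 2 p (Set.Ioi 0)) (hp1 : ContDiffOn ℝ 1 p (Set.Ici 0))
    (hp0 : p 0 = 0) (hp' : ∀ ρ ≥ (0:ℝ), 0 < deriv p ρ)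
    (hlim : Filter.Tendsto (fun ρ => deriv p ρ / ρ ^ (γ - 1)) Filter.atTop (nhds pinf))
    (H : ℝ → ℝ) (hH : ∀ ρ, H ρ = ρ * ∫ z in (1:ℝ)..ρ, p z / z ^ 2)
    (E : ℝ → ℝ → ℝ)
    (hE : ∀ ρ r, E ρ r = H ρ - deriv H r * (ρ - r) - H r)
    (a b : ℝ) (ha : 0 < a) (hab : a < b)
    (q : ℝ) (hq1 : 1 ≤ q) (hqγ : q ≤ γ) :
    ∃ c > (0:ℝ), ∀ ρ ≥ (0:ℝ), ∀ r ∈ Set.Icc a b,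
      |ρ - r| ^ q * (if ρ ∈ Set.Icc (a / 2) (2 * b) then (0:ℝ) else 1)
        ≤ c * E ρ r :=
  relative_energy_residual_bound_general p γ pinf hγ hpinf hp1 hp0 hp' hlim H hH E hE a b ha hab q
    hq1 hqγ
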